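/- If p·{u,v}^*·s ⊆ L for words u, v that are not powers of a common word, then L is not flat. -/

import Mathlib

/-!
A flat language has only polynomially many words of each length `ℓ`: a word of length `ℓ` in
`w₁ w₂^* w₃ ⋯` is determined by its exponents, each at most `ℓ`. If `u` and `v` are not powers of
a common word then `uv ≠ vu` (Lyndon–Schützenberger), so `uv` and `vu` are distinct blocks of the
same length and `p {uv, vu}^n s ⊆ p {u,v}^* s` contains `2^n` words of one length.
-/

open Computability

/-- `wpow w n` is the `n`-fold concatenation (iteration) of the word `w`. -/
def wpow {A : Type*} (w : List A) : ℕ → List A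
  | 0 => []
  | n + 1 => w ++ wpow w n

/-- A word is primitive if it cannot be written as `v ^ k` for any `k ≥ 2`. -/
def Primitive {A : Type*} (w : List A) : Prop :=
  ∀ (v : List A) (k : ℕ), 2 ≤ k → w ≠ wpow v k


/-- The language `w₁ ⬝ w₂^* ⬝ w₃ ⬝ w₄^* ⬝ ⋯ ⬝ w_{ℓ-1}^* ⬝ w_ℓ`, encoded by the
initial literal `w₁` and the list of pairs `(w₂, w₃), (w₄, w₅), …`. -/
def flatAtom {A : Type*} (w₁ : List A) (ps : List (List A × List A)) : Language A :=
  {w₁} * (ps.map fun q => ({q.1} : Language A)∗ * {q.2}).prod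

/-- A language is flat if it is a finite union of languages of the form
`w₁ ⬝ w₂^* ⬝ w₃ ⬝ ⋯ ⬝ w_{ℓ-1}^* ⬝ w_ℓ`. -/
def IsFlat {A : Type*} (L : Language A) : Prop :=
  ∃ (N : ℕ) (w : Fin N → List A) (ps : Fin N → List (List A × List A)),
    L = ⋃ i, flatAtom (w i) (ps i)

section

variable {A : Type*}

lemma wpow_add (w : List A) (m n : ℕ) : wpow w (m + n) = wpow w m ++ wpow w n := by
  induction m with
  | zero => simp [wpow]
  | succ m ih => simp [wpow, Nat.succ_add, ih]

lemma length_wpow (w : List A) (k : ℕ) : (wpow w k).length = k * w.length := by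
  induction k with
  | zero => simp [wpow]
  | succ k ih => simp [wpow, ih]; ring

lemma wpow_eq_flatten_replicate (w : List A) (k : ℕ) :
    wpow w k = (List.replicate k w).flatten := by
  induction k with
  | zero => rfl
  | succ k ih => simp [wpow, List.replicate_succ, ih]

lemma mem_kstar_singleton_iff {w x : List A} :
    x ∈ ({w} : Language A)∗ ↔ ∃ k, x = wpow w k := by
  simp only [Language.mem_kstar, wpow_eq_flatten_replicate]
  constructor
  · rintro ⟨L, rfl, hL⟩
    exact ⟨L.length, congrArg _ (List.eq_replicate_iff.mpr ⟨rfl, hL⟩)⟩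
  · rintro ⟨k, rfl⟩
    exact ⟨_, rfl, fun y hy => List.eq_of_mem_replicate hy⟩

theorem exists_eq_wpow_of_append_comm {u v : List A} (h : u ++ v = v ++ u) :
    ∃ (w : List A) (i j : ℕ), u = wpow w i ∧ v = wpow w j := by
  induction hn : u.length + v.length using Nat.strong_induction_on generalizing u v with
  | _ n ih =>
  obtain rfl | hu := eq_or_ne u []
  · exact ⟨v, 0, 1, rfl, by simp [wpow]⟩
  obtain rfl | hv := eq_or_ne v []
  · exact ⟨u, 1, 0, by simp [wpow], rfl⟩
  rcases List.append_eq_append_iff.mp h with ⟨t, rfl, ht⟩ | ⟨t, rfl, ht⟩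
  · have hlt : u.length + t.length < n := by
      simp [← hn, List.length_pos_iff.mpr hu]
    obtain ⟨w, i, j, rfl, rfl⟩ := ih _ hlt ht rfl
    exact ⟨w, i, i + j, rfl, (wpow_add w i j).symm⟩
  · have hlt : v.length + t.length < n := by
      simp [← hn, List.length_pos_iff.mpr hv]
    obtain ⟨w, i, j, rfl, rfl⟩ := ih _ hlt ht rfl
    exact ⟨w, i + j, i, (wpow_add w i j).symm, rfl⟩

lemma append_mem_kstar {K : Language A} {x y : List A} (hx : x ∈ K∗) (hy : y ∈ K∗) :
    x ++ y ∈ K∗ := by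
  rw [← kstar_mul_kstar K]
  exact Language.append_mem_mul hx hy

def HasPolynomialGrowth (L : Language A) : Prop :=
  ∃ C d : ℕ, ∀ (ℓ : ℕ) (T : Finset (List A)),
    (∀ x ∈ T, x ∈ L ∧ x.length = ℓ) → T.card ≤ C * (ℓ + 1) ^ d

namespace HasPolynomialGrowth

lemma mono {L L' : Language A} (h : HasPolynomialGrowth L) (hle : L' ≤ L) :
    HasPolynomialGrowth L' := by
  obtain ⟨C, d, hC⟩ := h
  exact ⟨C, d, fun ℓ T hT => hC ℓ T fun x hx => ⟨hle (hT x hx).1, (hT x hx).2⟩⟩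

lemma iUnion {ι : Type*} [Fintype ι] {L : ι → Language A}
    (h : ∀ i, HasPolynomialGrowth (L i)) : HasPolynomialGrowth (⋃ i, L i) := by
  classical
  choose C d hC using h
  refine ⟨∑ i, C i, Finset.univ.sup d, fun ℓ T hT => ?_⟩
  have hcover : T ⊆ Finset.univ.biUnion fun i => T.filter (· ∈ L i) := by
    intro x hx
    obtain ⟨i, hi⟩ := Set.mem_iUnion.mp (hT x hx).1
    exact Finset.mem_biUnion.mpr ⟨i, Finset.mem_univ i, Finset.mem_filter.mpr ⟨hx, hi⟩⟩
  have hpiece (i : ι) : (T.filter (· ∈ L i)).card ≤ C i * (ℓ + 1) ^ Finset.univ.sup d := by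
    refine (hC i ℓ _ fun x hx => ?_).trans ?_
    · rw [Finset.mem_filter] at hx
      exact ⟨hx.2, (hT x hx.1).2⟩
    · exact Nat.mul_le_mul_left _
        (Nat.pow_le_pow_right ℓ.succ_pos (Finset.le_sup (Finset.mem_univ i)))
  calc T.card ≤ ∑ i, (T.filter (· ∈ L i)).card :=
        (Finset.card_le_card hcover).trans Finset.card_biUnion_le
    _ ≤ ∑ i, C i * (ℓ + 1) ^ Finset.univ.sup d := Finset.sum_le_sum fun i _ => hpiece i
    _ = (∑ i, C i) * (ℓ + 1) ^ Finset.univ.sup d := (Finset.sum_mul ..).symm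

end HasPolynomialGrowth

def flatTailWord (ps : List (List A × List A)) (ks : List ℕ) : List A :=
  (List.zipWith (fun q k => wpow q.1 k ++ q.2) ps ks).flatten

lemma exists_le_length_of_mem_kstar_mul {a b x : List A}
    (hx : x ∈ ({a} : Language A)∗ * {b}) : ∃ k ≤ x.length, x = wpow a k ++ b := by
  obtain ⟨y, hy, z, rfl, rfl⟩ := Language.mem_mul.mp hx
  obtain ⟨k, rfl⟩ := mem_kstar_singleton_iff.mp hy
  obtain rfl | ha := eq_or_ne a []
  · exact ⟨0, Nat.zero_le _, by simp [wpow_eq_flatten_replicate, wpow]⟩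
  · refine ⟨k, ?_, rfl⟩
    calc k ≤ k * a.length := Nat.le_mul_of_pos_right k (List.length_pos_iff.mpr ha)
      _ ≤ _ := by simp [length_wpow]

lemma exists_exponents_of_mem_prod (ps : List (List A × List A)) {x : List A}
    (hx : x ∈ (ps.map fun q => ({q.1} : Language A)∗ * {q.2}).prod) :
    ∃ ks : List ℕ, ks.length = ps.length ∧ (∀ k ∈ ks, k ≤ x.length) ∧ x = flatTailWord ps ks := by
  induction ps generalizing x with
  | nil => exact ⟨[], rfl, by simp, by simpa [flatTailWord] using hx⟩
  | cons q ps ih =>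
    rw [List.map_cons, List.prod_cons] at hx
    obtain ⟨y, hy, z, hz, rfl⟩ := Language.mem_mul.mp hx
    obtain ⟨k, hk, rfl⟩ := exists_le_length_of_mem_kstar_mul hy
    obtain ⟨ks, hlen, hks, rfl⟩ := ih hz
    refine ⟨k :: ks, by simp [hlen], ?_, by simp [flatTailWord]⟩
    simp only [List.mem_cons, List.length_append] at hk ⊢
    rintro k' (rfl | hk')
    · omega
    · have := hks k' hk'
      omega

lemma hasPolynomialGrowth_flatAtom (w₁ : List A) (ps : List (List A × List A)) :
    HasPolynomialGrowth (flatAtom w₁ ps) := by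
  classical
  refine ⟨1, ps.length, fun ℓ T hT => ?_⟩
  have hcover : T ⊆ Finset.univ.image fun ks : Fin ps.length → Fin (ℓ + 1) =>
      w₁ ++ flatTailWord ps (List.ofFn fun j => (ks j : ℕ)) := by
    intro x hx
    obtain ⟨hxL, rfl⟩ := hT x hx
    obtain ⟨a, rfl, y, hy, rfl⟩ := Language.mem_mul.mp hxL
    obtain ⟨ks, hlen, hks, rfl⟩ := exists_exponents_of_mem_prod ps hy
    refine Finset.mem_image.mpr ⟨fun j => ⟨ks[j.1], ?_⟩, Finset.mem_univ _, ?_⟩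
    · have := hks ks[j.1] (List.getElem_mem _)
      simp only [List.length_append]
      omega
    · congr 2
      exact List.ext_getElem (by simp [hlen]) fun i _ _ => by simp
  calc T.card ≤ (Finset.univ : Finset (Fin ps.length → Fin (ℓ + 1))).card :=
        (Finset.card_le_card hcover).trans Finset.card_image_le
    _ = 1 * (ℓ + 1) ^ ps.length := by simp

lemma IsFlat.hasPolynomialGrowth {L : Language A} (h : IsFlat L) : HasPolynomialGrowth L := by
  obtain ⟨N, w, ps, rfl⟩ := h
  exact HasPolynomialGrowth.iUnion fun i => hasPolynomialGrowth_flatAtom (w i) (ps i)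

def blockWord (x y : List A) (l : List Bool) : List A :=
  l.flatMap fun b => if b then x else y

lemma length_blockWord {x y : List A} (hlen : x.length = y.length) (l : List Bool) :
    (blockWord x y l).length = l.length * x.length := by
  induction l with
  | nil => simp [blockWord]
  | cons b l ih =>
    rw [blockWord, List.flatMap_cons, List.length_append, ← blockWord, ih]
    cases b <;> simp [hlen] <;> ring

lemma blockWord_injective {x y : List A} (hlen : x.length = y.length) (hne : x ≠ y) :
    Function.Injective (blockWord x y) := by
  have hpos : 0 < x.length := by
    by_contra! h0
    have hx : x = [] := List.length_eq_zero_iff.mp (by omega)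
    have hy : y = [] := List.length_eq_zero_iff.mp (by omega)
    exact hne (hx.trans hy.symm)
  intro l₁ l₂ h
  have hl : l₁.length = l₂.length := by
    have := congrArg List.length h
    rw [length_blockWord hlen, length_blockWord hlen] at this
    exact Nat.eq_of_mul_eq_mul_right hpos this
  induction l₁ generalizing l₂ with
  | nil => exact (List.length_eq_zero_iff.mp hl.symm).symm
  | cons a l₁ ih =>
    obtain _ | ⟨b, l₂⟩ := l₂
    · simp at hl
    simp only [blockWord, List.flatMap_cons] at h
    obtain ⟨hab, htl⟩ := List.append_inj h (by cases a <;> cases b <;> simp [hlen])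
    have hab : a = b := by cases a <;> cases b <;> simp_all
    rw [hab, ih htl (by simpa using hl)]

lemma blockWord_mem_kstar {K : Language A} {x y : List A} (hx : x ∈ K∗) (hy : y ∈ K∗)
    (l : List Bool) : blockWord x y l ∈ K∗ := by
  induction l with
  | nil => exact Language.nil_mem_kstar K
  | cons b l ih => exact append_mem_kstar (by cases b <;> assumption) ih

lemma exists_finset_card_eq_two_pow {u v : List A} (huv : u ++ v ≠ v ++ u) (p s : List A)
    (n : ℕ) : ∃ T : Finset (List A), T.card = 2 ^ n ∧ ∀ x ∈ T,
      x ∈ ({p} : Language A) * ({u, v} : Language A)∗ * {s} ∧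
        x.length = p.length + n * (u ++ v).length + s.length := by
  classical
  have hlen : (u ++ v).length = (v ++ u).length := by simp [Nat.add_comm]
  have hgen : ({u, v} : Language A) ≤ ({u, v} : Language A)∗ := le_kstar
  have hu : u ∈ ({u, v} : Language A)∗ := hgen (Set.mem_insert u _)
  have hv : v ∈ ({u, v} : Language A)∗ := hgen (Set.mem_insert_of_mem u rfl)
  let f (σ : Fin n → Bool) : List A := p ++ blockWord (u ++ v) (v ++ u) (List.ofFn σ) ++ s
  have hf : f.Injective := fun σ τ h => List.ofFn_injective <|
    blockWord_injective hlen huv (List.append_cancel_left (List.append_cancel_right h))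
  refine ⟨Finset.univ.image f, by simp [Finset.card_image_of_injective _ hf], ?_⟩
  simp only [Finset.mem_image, Finset.mem_univ, true_and]
  rintro _ ⟨σ, rfl⟩
  refine ⟨Language.append_mem_mul (Language.append_mem_mul rfl ?_) rfl, ?_⟩
  · exact blockWord_mem_kstar (append_mem_kstar hu hv) (append_mem_kstar hv hu) _
  · simp [f, length_blockWord hlen, Nat.add_assoc]

lemma exists_mul_pow_lt_two_pow (K d : ℕ) : ∃ n : ℕ, K * (n + 1) ^ d < 2 ^ n := by
  have h := (tendsto_pow_const_div_const_pow_of_one_lt d one_lt_two).comp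
    (Filter.tendsto_add_atTop_nat 1)
  obtain ⟨n, hn⟩ := (h.eventually (gt_mem_nhds (show (0 : ℝ) < 1 / (2 * (K + 1)) by
    positivity))).exists
  refine ⟨n, ?_⟩
  simp only [Function.comp, Nat.cast_add, Nat.cast_one] at hn
  rw [div_lt_div_iff₀ (by positivity) (by positivity), pow_succ] at hn
  have : ((K * (n + 1) ^ d : ℕ) : ℝ) < 2 ^ n := by
    push_cast
    nlinarith [pow_pos (two_pos (α := ℝ)) n]
  exact_mod_cast this

lemma not_hasPolynomialGrowth_of_append_ne {u v : List A} (huv : u ++ v ≠ v ++ u)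
    (p s : List A) :
    ¬ HasPolynomialGrowth (({p} : Language A) * ({u, v} : Language A)∗ * {s}) := by
  rintro ⟨C, d, hC⟩
  set c := p.length + (u ++ v).length + s.length + 1
  obtain ⟨n, hn⟩ := exists_mul_pow_lt_two_pow (C * c ^ d) d
  obtain ⟨T, hcard, hT⟩ := exists_finset_card_eq_two_pow huv p s n
  have hℓ : p.length + n * (u ++ v).length + s.length + 1 ≤ c * (n + 1) := by
    simp only [c]; nlinarith
  refine hn.not_ge ?_
  calc 2 ^ n = T.card := hcard.symm
    _ ≤ C * (p.length + n * (u ++ v).length + s.length + 1) ^ d := hC _ T hT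
    _ ≤ C * (c * (n + 1)) ^ d := by gcongr
    _ = C * c ^ d * (n + 1) ^ d := by rw [mul_pow, mul_assoc]

end

/-- If `p ⬝ {u,v}^* ⬝ s ⊆ L` for words `u`, `v` that are not powers of a common
word, then `L` is not flat. -/
theorem butterfly_not_flat {A : Type*} (L : Language A) (p s u v : List A)
    (huv : ¬ ∃ (w : List A) (i j : ℕ), u = wpow w i ∧ v = wpow w j)
    (hsub : ({p} : Language A) * ({u, v} : Language A)∗ * {s} ≤ L) :
    ¬ IsFlat L := fun hflat =>
  not_hasPolynomialGrowth_of_append_ne (fun h => huv (exists_eq_wpow_of_append_comm h)) p s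
    (hflat.hasPolynomialGrowth.mono hsub)
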